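/- Let 1 < p < ∞, ω ∈ L¹(ℝ²) ∩ L^p(ℝ²), and f ∈ C²(ℝ) with f' and f'' bounded. For v ∈ L^p(ℝ²), define the linear operator D(v) ∈ ℒ(L^p(ℝ²)) by (D(v)h)(x) = ∫_{ℝ²} ω(x−y) f'(v(y)) h(y) dy. Then the map v ↦ D(v) is continuous from L^p(ℝ²) to ℒ(L^p(ℝ²)): if v_n → v in L^p then ‖D(v_n) − D(v)‖_{ℒ(L^p)} → 0. -/

import Mathlib

/-!
Write `m = f' ∘ vₙ - f' ∘ v`, so that `(D(vₙ) - D(v)) h = ω ⋆ (m h)`, which is dominated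
pointwise by the `ℝ≥0∞`-valued convolution `|m h| ⋆ |ω|`. Split `ℝ²` along
`E = {|vₙ - v| ≥ η}`. On `E`, `|m| ≤ 2 sup |f'|`, and Hölder's inequality on `E` together with
Young's inequality `‖F ⋆ ω‖_p ≤ ‖F‖₁ ‖ω‖_p` bound this part by
`2 sup |f'| ‖ω‖_p |E|^(1 - 1/p) ‖h‖_p`. Off `E`, `|m| ≤ sup |f''| η`, and Young's inequality
`‖F ⋆ ω‖_p ≤ ‖F‖_p ‖ω‖₁` bounds this part by `sup |f''| η ‖ω‖₁ ‖h‖_p`. Choose `η` to make the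
second bound small; the first then tends to zero because convergence in `L^p` implies
convergence in measure, so `|E| → 0`.
-/

open MeasureTheory Filter
open scoped ENNReal NNReal Topology

namespace MeasureTheory

section AddGroup

variable {G : Type*} [MeasurableSpace G] [AddGroup G] [MeasurableAdd₂ G] [MeasurableNeg G]
  {μ : Measure G} [SFinite μ] [μ.IsAddLeftInvariant] {f g : G → ℝ≥0∞}

theorem lintegral_lconvolution (hf : AEMeasurable f μ) (hg : AEMeasurable g μ) :
    ∫⁻ x, (f ⋆ₗ[μ] g) x ∂μ = (∫⁻ x, f x ∂μ) * ∫⁻ x, g x ∂μ := by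
  simp only [lconvolution_def]
  rw [lintegral_lintegral_swap (by fun_prop)]
  calc ∫⁻ y, ∫⁻ x, f y * g (-y + x) ∂μ ∂μ = ∫⁻ y, f y * ∫⁻ x, g x ∂μ ∂μ := by
        refine lintegral_congr fun y => ?_
        have hgy : AEMeasurable (fun x => g (-y + x)) μ :=
          hg.comp_quasiMeasurePreserving (measurePreserving_add_left μ (-y)).quasiMeasurePreserving
        rw [lintegral_const_mul'' _ hgy, lintegral_add_left_eq_self g (-y)]
    _ = _ := lintegral_mul_const'' _ hf

theorem lconvolution_rpow_le {r r' : ℝ} (hr : r.HolderConjugate r') (hf : AEMeasurable f μ)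
    (hg : AEMeasurable g μ) (x : G) :
    (f ⋆ₗ[μ] g) x ^ r ≤ (∫⁻ y, f y ∂μ) ^ (r - 1) * (f ⋆ₗ[μ] fun y => g y ^ r) x := by
  have holder : (f ⋆ₗ[μ] g) x
      ≤ (∫⁻ y, f y ∂μ) ^ r'⁻¹ * (f ⋆ₗ[μ] fun y => g y ^ r) x ^ r⁻¹ := by
    calc (f ⋆ₗ[μ] g) x
        = ∫⁻ y, ((fun y => f y ^ r'⁻¹) * fun y => f y ^ r⁻¹ * g (-y + x)) y ∂μ := by
          refine lintegral_congr fun y => ?_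
          rw [Pi.mul_apply, ← mul_assoc, ← ENNReal.rpow_add_of_nonneg _ _
            hr.symm.inv_nonneg hr.inv_nonneg, hr.symm.inv_add_inv_eq_one, ENNReal.rpow_one]
      _ ≤ (∫⁻ y, (f y ^ r'⁻¹) ^ r' ∂μ) ^ (1 / r')
            * (∫⁻ y, (f y ^ r⁻¹ * g (-y + x)) ^ r ∂μ) ^ (1 / r) :=
          ENNReal.lintegral_mul_le_Lp_mul_Lq μ hr.symm (by fun_prop) (by fun_prop)
      _ = _ := by
          simp only [one_div, ENNReal.mul_rpow_of_nonneg _ _ hr.nonneg,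
            ENNReal.rpow_inv_rpow hr.symm.ne_zero, ENNReal.rpow_inv_rpow hr.ne_zero]
          rfl
  calc (f ⋆ₗ[μ] g) x ^ r
      ≤ ((∫⁻ y, f y ∂μ) ^ r'⁻¹ * (f ⋆ₗ[μ] fun y => g y ^ r) x ^ r⁻¹) ^ r :=
        ENNReal.rpow_le_rpow holder hr.nonneg
    _ = _ := by
        rw [ENNReal.mul_rpow_of_nonneg _ _ hr.nonneg, ← ENNReal.rpow_mul, ← ENNReal.rpow_mul,
          inv_mul_cancel₀ hr.ne_zero, ENNReal.rpow_one, inv_mul_eq_div, hr.div_conj_eq_sub_one]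

theorem eLpNorm_lconvolution_le_eLpNorm_one_mul {p : ℝ≥0∞} (hp : 1 < p) (hp_top : p ≠ ∞)
    (hf : AEMeasurable f μ) (hg : AEMeasurable g μ) :
    eLpNorm (f ⋆ₗ[μ] g) p μ ≤ eLpNorm f 1 μ * eLpNorm g p μ := by
  have hr : p.toReal.HolderConjugate p.toReal.conjExponent :=
    .conjExponent (by simpa using ENNReal.toReal_strict_mono hp_top hp)
  set r := p.toReal
  have hr1 : (1 : ℝ) ≤ r := hr.lt.le
  simp only [eLpNorm_one_eq_lintegral_enorm, eLpNorm_eq_lintegral_rpow_enorm_toReal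
    (zero_lt_one.trans hp).ne' hp_top, enorm_eq_self, one_div]
  calc (∫⁻ x, (f ⋆ₗ[μ] g) x ^ r ∂μ) ^ r⁻¹
      ≤ ((∫⁻ y, f y ∂μ) ^ (r - 1) * ∫⁻ x, (f ⋆ₗ[μ] fun y => g y ^ r) x ∂μ) ^ r⁻¹ := by
        rw [← lintegral_const_mul'' _ (aemeasurable_lconvolution hf (by fun_prop))]
        gcongr with x
        exact lconvolution_rpow_le hr hf hg x
    _ = ((∫⁻ y, f y ∂μ) ^ r * ∫⁻ y, g y ^ r ∂μ) ^ r⁻¹ := by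
        have hpow : (∫⁻ y, f y ∂μ) ^ (r - 1) * ∫⁻ y, f y ∂μ = (∫⁻ y, f y ∂μ) ^ r := by
          conv_lhs => enter [2]; rw [← ENNReal.rpow_one (∫⁻ y, f y ∂μ)]
          rw [← ENNReal.rpow_add_of_nonneg _ _ (sub_nonneg.2 hr1) zero_le_one, sub_add_cancel]
        rw [lintegral_lconvolution hf (by fun_prop), ← mul_assoc, hpow]
    _ = (∫⁻ y, f y ∂μ) * (∫⁻ y, g y ^ r ∂μ) ^ r⁻¹ := by
        rw [ENNReal.mul_rpow_of_nonneg _ _ (by positivity), ENNReal.rpow_rpow_inv hr.ne_zero]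

end AddGroup

theorem eLpNorm_one_restrict_le {α F : Type*} [MeasurableSpace α] [NormedAddCommGroup F]
    {μ : Measure α} {p : ℝ≥0∞} (hp : 1 ≤ p) {f : α → F} (hf : AEStronglyMeasurable f μ)
    (E : Set α) :
    eLpNorm f 1 (μ.restrict E) ≤ eLpNorm f p μ * μ E ^ (1 - p.toReal⁻¹) := by
  calc eLpNorm f 1 (μ.restrict E)
      ≤ eLpNorm f p (μ.restrict E)
          * μ.restrict E Set.univ ^ (1 / (1 : ℝ≥0∞).toReal - 1 / p.toReal) :=
        eLpNorm_le_eLpNorm_mul_rpow_measure_univ hp hf.restrict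
    _ ≤ eLpNorm f p μ * μ E ^ (1 - p.toReal⁻¹) := by
        rw [Measure.restrict_apply_univ]
        simp only [ENNReal.toReal_one, one_div, inv_one]
        gcongr
        exact Measure.restrict_le_self

theorem enorm_integral_sub_mul_le_lconvolution {G : Type*} [MeasurableSpace G] [AddCommGroup G]
    {μ : Measure G} (ω g : G → ℝ) (x : G) :
    ‖∫ y, ω (x - y) * g y ∂μ‖ₑ ≤ ((fun y => ‖g y‖ₑ) ⋆ₗ[μ] fun z => ‖ω z‖ₑ) x := by
  refine (enorm_integral_le_lintegral_enorm _).trans_eq (lintegral_congr fun y => ?_)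
  rw [enorm_mul, mul_comm, neg_add_eq_sub]

section AddCommGroup

variable {G : Type*} [MeasurableSpace G] [AddCommGroup G] [MeasurableAdd₂ G] [MeasurableNeg G]
  {μ : Measure G} [μ.IsAddLeftInvariant] [μ.IsNegInvariant] {f g : G → ℝ≥0∞}

theorem add_lconvolution {f₁ f₂ : G → ℝ≥0∞} (hf₁ : AEMeasurable f₁ μ) (hg : AEMeasurable g μ) :
    (f₁ + f₂) ⋆ₗ[μ] g = f₁ ⋆ₗ[μ] g + f₂ ⋆ₗ[μ] g := by
  ext x
  simp only [lconvolution_def, Pi.add_apply, add_mul, neg_add_eq_sub]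
  exact lintegral_add_left' (hf₁.mul (hg.comp_quasiMeasurePreserving
    (Measure.measurePreserving_sub_left μ x).quasiMeasurePreserving)) _

variable [SFinite μ]

theorem eLpNorm_lconvolution_le_mul_eLpNorm_one {p : ℝ≥0∞} (hp : 1 < p) (hp_top : p ≠ ∞)
    (hf : AEMeasurable f μ) (hg : AEMeasurable g μ) :
    eLpNorm (f ⋆ₗ[μ] g) p μ ≤ eLpNorm f p μ * eLpNorm g 1 μ := by
  rw [lconvolution_comm, mul_comm]
  exact eLpNorm_lconvolution_le_eLpNorm_one_mul hp hp_top hg hf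

theorem eLpNorm_integral_sub_mul_mul_le {p : ℝ≥0∞} (hp : 1 < p) (hp_top : p ≠ ∞)
    {ω m h : G → ℝ} (hω : AEStronglyMeasurable ω μ) (hm : AEStronglyMeasurable m μ)
    (hh : AEStronglyMeasurable h μ) {E : Set G} (hE : MeasurableSet E) {a b : ℝ≥0∞}
    (hma : ∀ y, ‖m y‖ₑ ≤ a) (hmb : ∀ y ∉ E, ‖m y‖ₑ ≤ b) :
    eLpNorm (fun x => ∫ y, ω (x - y) * m y * h y ∂μ) p μ
      ≤ (eLpNorm ω p μ * a * μ E ^ (1 - p.toReal⁻¹) + eLpNorm ω 1 μ * b) * eLpNorm h p μ := by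
  set g : G → ℝ≥0∞ := fun y => ‖m y * h y‖ₑ
  set K : G → ℝ≥0∞ := fun z => ‖ω z‖ₑ
  have hg : AEMeasurable g μ := (hm.mul hh).enorm
  have hK : AEMeasurable K μ := hω.enorm
  have hg_eq : ∀ y, g y = ‖m y‖ₑ * ‖h y‖ₑ := fun y => enorm_mul _ _
  have hnear : eLpNorm (E.indicator g) 1 μ ≤ a * μ E ^ (1 - p.toReal⁻¹) * eLpNorm h p μ := by
    rw [eLpNorm_indicator_eq_eLpNorm_restrict hE]
    calc eLpNorm g 1 (μ.restrict E) ≤ a * eLpNorm h 1 (μ.restrict E) :=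
          eLpNorm_le_mul_eLpNorm_of_ae_le_mul'' 1 hh.restrict <| ae_of_all _ fun y => by
            rw [enorm_eq_self, hg_eq]
            exact mul_le_mul_left (hma y) _
      _ ≤ a * (eLpNorm h p μ * μ E ^ (1 - p.toReal⁻¹)) := by
          gcongr
          exact eLpNorm_one_restrict_le hp.le hh E
      _ = _ := by ring
  have hfar : eLpNorm (Eᶜ.indicator g) p μ ≤ b * eLpNorm h p μ := by
    refine eLpNorm_le_mul_eLpNorm_of_ae_le_mul'' p hh (ae_of_all _ fun y => ?_)
    by_cases hy : y ∈ E
    · simp [hy]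
    · rw [Set.indicator_of_mem (Set.mem_compl hy), enorm_eq_self, hg_eq]
      exact mul_le_mul_left (hmb y hy) _
  calc eLpNorm (fun x => ∫ y, ω (x - y) * m y * h y ∂μ) p μ
      ≤ eLpNorm (g ⋆ₗ[μ] K) p μ := eLpNorm_mono_enorm fun x => by
        rw [enorm_eq_self]
        simp only [mul_assoc]
        exact enorm_integral_sub_mul_le_lconvolution ω (m * h) x
    _ = eLpNorm (E.indicator g ⋆ₗ[μ] K + Eᶜ.indicator g ⋆ₗ[μ] K) p μ := by
        rw [← add_lconvolution (hg.indicator hE) hK, Set.indicator_self_add_compl]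
    _ ≤ eLpNorm (E.indicator g ⋆ₗ[μ] K) p μ + eLpNorm (Eᶜ.indicator g ⋆ₗ[μ] K) p μ :=
        eLpNorm_add_le (aemeasurable_lconvolution (hg.indicator hE) hK).aestronglyMeasurable
          (aemeasurable_lconvolution (hg.indicator hE.compl) hK).aestronglyMeasurable hp.le
    _ ≤ eLpNorm (E.indicator g) 1 μ * eLpNorm K p μ
          + eLpNorm (Eᶜ.indicator g) p μ * eLpNorm K 1 μ :=
        add_le_add (eLpNorm_lconvolution_le_eLpNorm_one_mul hp hp_top (hg.indicator hE) hK)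
          (eLpNorm_lconvolution_le_mul_eLpNorm_one hp hp_top (hg.indicator hE.compl) hK)
    _ ≤ a * μ E ^ (1 - p.toReal⁻¹) * eLpNorm h p μ * eLpNorm ω p μ
          + b * eLpNorm h p μ * eLpNorm ω 1 μ := by
        simp only [K, eLpNorm_enorm]
        gcongr
    _ = _ := by ring

theorem eLpNorm_integral_sub_mul_comp_sub_comp_mul_le {p : ℝ≥0∞} (hp : 1 < p) (hp_top : p ≠ ∞)
    {ω h : G → ℝ} (hω : AEStronglyMeasurable ω μ) (hh : AEStronglyMeasurable h μ)
    {g : ℝ → ℝ} {L : ℝ≥0} (hg : LipschitzWith L g) {c : ℝ≥0∞} (hgc : ∀ t, ‖g t‖ₑ ≤ c)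
    {u v : G → ℝ} (hu : AEStronglyMeasurable u μ) (hv : AEStronglyMeasurable v μ) (η : ℝ≥0∞) :
    eLpNorm (fun x => ∫ y, ω (x - y) * (g (u y) - g (v y)) * h y ∂μ) p μ
      ≤ (eLpNorm ω p μ * (2 * c) * μ {y | η ≤ edist (u y) (v y)} ^ (1 - p.toReal⁻¹)
          + eLpNorm ω 1 μ * (L * η)) * eLpNorm h p μ := by
  have hm : AEStronglyMeasurable (fun y => g (u y) - g (v y)) μ :=
    (hg.continuous.comp_aestronglyMeasurable hu).sub (hg.continuous.comp_aestronglyMeasurable hv)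
  have hnear : ∀ y, ‖g (u y) - g (v y)‖ₑ ≤ 2 * c := fun y =>
    enorm_sub_le.trans ((add_le_add (hgc _) (hgc _)).trans_eq (two_mul c).symm)
  have hfar : ∀ y ∉ toMeasurable μ {y | η ≤ edist (u y) (v y)},
      ‖g (u y) - g (v y)‖ₑ ≤ L * η := fun y hy => by
    have hy' : edist (u y) (v y) < η := not_le.1 fun h => hy (subset_toMeasurable _ _ h)
    calc ‖g (u y) - g (v y)‖ₑ = edist (g (u y)) (g (v y)) := (edist_eq_enorm_sub _ _).symm
      _ ≤ L * edist (u y) (v y) := hg.edist_le_mul _ _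
      _ ≤ L * η := by gcongr
  simpa only [measure_toMeasurable] using eLpNorm_integral_sub_mul_mul_le hp hp_top hω hm hh
    (measurableSet_toMeasurable μ _) hnear hfar

theorem TendstoInMeasure.eventually_eLpNorm_integral_sub_mul_comp_sub_comp_mul_le
    {ι : Type*} {l : Filter ι} {u : ι → G → ℝ} {v : G → ℝ} (huv : TendstoInMeasure μ u l v)
    (hu : ∀ i, AEStronglyMeasurable (u i) μ) (hv : AEStronglyMeasurable v μ)
    {p : ℝ≥0∞} (hp : 1 < p) (hp_top : p ≠ ∞) {ω : G → ℝ} (hω1 : MemLp ω 1 μ) (hωp : MemLp ω p μ)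
    {g : ℝ → ℝ} {L : ℝ≥0} (hg : LipschitzWith L g) {c : ℝ≥0∞} (hgc : ∀ t, ‖g t‖ₑ ≤ c)
    (hc : c ≠ ∞) {e : ℝ≥0∞} (he : 0 < e) :
    ∀ᶠ i in l, ∀ h : G → ℝ, AEStronglyMeasurable h μ →
      eLpNorm (fun x => ∫ y, ω (x - y) * (g (u i y) - g (v y)) * h y ∂μ) p μ
        ≤ e * eLpNorm h p μ := by
  set η := e / 2 / (eLpNorm ω 1 μ * L)
  have hη : 0 < η := ENNReal.div_pos (ENNReal.half_pos he.ne').ne'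
    (ENNReal.mul_ne_top hω1.2.ne ENNReal.coe_ne_top)
  have hfar : eLpNorm ω 1 μ * (L * η) ≤ e / 2 := by
    rw [← mul_assoc]
    exact ENNReal.mul_div_le
  have hs : 0 < 1 - p.toReal⁻¹ :=
    sub_pos.2 (inv_lt_one_of_one_lt₀ (by simpa using ENNReal.toReal_strict_mono hp_top hp))
  have hnear : Tendsto (fun i => eLpNorm ω p μ * (2 * c)
      * μ {y | η ≤ edist (u i y) (v y)} ^ (1 - p.toReal⁻¹)) l (𝓝 0) := by
    simpa [ENNReal.zero_rpow_of_pos hs] using ENNReal.Tendsto.const_mul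
      ((huv η hη).ennrpow_const (1 - p.toReal⁻¹))
      (Or.inr (ENNReal.mul_ne_top hωp.2.ne (ENNReal.mul_ne_top ENNReal.ofNat_ne_top hc)))
  filter_upwards [hnear.eventually_lt_const (ENNReal.half_pos he.ne')] with i hi h hh
  calc _ ≤ (eLpNorm ω p μ * (2 * c) * μ {y | η ≤ edist (u i y) (v y)} ^ (1 - p.toReal⁻¹)
          + eLpNorm ω 1 μ * (L * η)) * eLpNorm h p μ :=
        eLpNorm_integral_sub_mul_comp_sub_comp_mul_le hp hp_top hωp.1 hh hg hgc (hu i) hv η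
    _ ≤ (e / 2 + e / 2) * eLpNorm h p μ := by gcongr
    _ = e * eLpNorm h p μ := by rw [ENNReal.add_halves]

end AddCommGroup

end MeasureTheory

/-- Continuity of `v ↦ D(v)` in operator norm, where
`(D(v)h)(x) = ∫ ω(x−y) f'(v(y)) h(y) dy`: if `v_n → v` in `L^p(ℝ²)` (`1 < p < ∞`,
`ω ∈ L¹ ∩ L^p`, `f ∈ C²` with bounded `f'`, `f''`), then `‖D(v_n) − D(v)‖_{ℒ(L^p)} → 0`,
expressed as: for every `ε > 0`, eventually in `n`, `‖(D(v_n) − D(v))h‖_p ≤ ε‖h‖_p`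
for all `h ∈ L^p`. -/
theorem derivative_operator_continuous
    (p : ℝ≥0∞) (hp1 : 1 < p) (hptop : p ≠ ⊤)
    (ω : EuclideanSpace ℝ (Fin 2) → ℝ) (hω1 : Integrable ω) (hωp : MemLp ω p volume)
    (f : ℝ → ℝ) (hf : ContDiff ℝ 2 f)
    (hf' : ∃ C, ∀ s, |deriv f s| ≤ C) (hf'' : ∃ C, ∀ s, |deriv (deriv f) s| ≤ C)
    (vn : ℕ → EuclideanSpace ℝ (Fin 2) → ℝ) (hvn : ∀ n, MemLp (vn n) p volume)
    (v : EuclideanSpace ℝ (Fin 2) → ℝ) (hv : MemLp v p volume)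
    (hconv : Tendsto (fun n => eLpNorm (vn n - v) p volume) atTop (𝓝 0)) :
    ∀ ε : ℝ, 0 < ε → ∃ N : ℕ, ∀ n ≥ N,
      ∀ h : EuclideanSpace ℝ (Fin 2) → ℝ, MemLp h p volume →
        eLpNorm (fun x => ∫ y, ω (x - y) * (deriv f (vn n y) - deriv f (v y)) * h y)
            p volume
          ≤ ENNReal.ofReal ε * eLpNorm h p volume := by
  intro ε hε
  obtain ⟨C₁, hC₁⟩ := hf'
  obtain ⟨C₂, hC₂⟩ := hf''
  have hbound : ∀ t, ‖deriv f t‖ₑ ≤ ENNReal.ofReal C₁ := fun t => by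
    simpa only [Real.enorm_eq_ofReal_abs] using ENNReal.ofReal_le_ofReal (hC₁ t)
  have hlip : LipschitzWith C₂.toNNReal (deriv f) := by
    refine lipschitzWith_of_nnnorm_deriv_le ((hf.deriv' (n := 1)).differentiable one_ne_zero)
      fun t => ?_
    rw [← NNReal.coe_le_coe, coe_nnnorm, Real.norm_eq_abs, Real.coe_toNNReal']
    exact (hC₂ t).trans (le_max_left _ _)
  have hmeas := tendstoInMeasure_of_tendsto_eLpNorm (zero_lt_one.trans hp1).ne'
    (fun n => (hvn n).1) hv.1 hconv
  obtain ⟨N, hN⟩ := eventually_atTop.1 <|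
    hmeas.eventually_eLpNorm_integral_sub_mul_comp_sub_comp_mul_le (fun n => (hvn n).1) hv.1
      hp1 hptop (memLp_one_iff_integrable.2 hω1) hωp hlip hbound ENNReal.ofReal_ne_top
      (ENNReal.ofReal_pos.2 hε)
  exact ⟨N, fun n hn h hh => hN n hn h hh.1⟩
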